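/- arXiv:0708.2474 — 3 statements merged into one kernel-verified Lean document; each statement's English description precedes it below -/
import Mathlib

section
/- Let f : ℝⁿ → ℝ be a polynomial of degree d ≥ 2. Suppose (x_k) is a sequence in ℝⁿ such that ‖x_k‖ → +∞, x_k/‖x_k‖ → u for some unit vector u ∈ S^{n-1}, and ‖∇f(x_k)‖ → 0. Then ∇f_d(u) = 0, i.e. ∂f_d/∂x_i(u) = 0 for every i = 1, …, n. -/
open MvPolynomial Filter Topology

/-- Evaluation of a multivariate polynomial at a point of Euclidean space. -/
noncomputable def pevalE {n : ℕ} (f : MvPolynomial (Fin n) ℝ) (x : EuclideanSpace ℝ (Fin n)) : ℝ :=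
  eval (EuclideanSpace.equiv (Fin n) ℝ x) f

/-- The gradient vector (∂f/∂x_1, …, ∂f/∂x_n) of a polynomial, at a point of Euclidean space. -/
noncomputable def pgrad {n : ℕ} (f : MvPolynomial (Fin n) ℝ) (x : EuclideanSpace ℝ (Fin n)) :
    EuclideanSpace ℝ (Fin n) :=
  (EuclideanSpace.equiv (Fin n) ℝ).symm
    (fun i => eval (EuclideanSpace.equiv (Fin n) ℝ x) (pderiv i f))

/-!
Split `g = ∑_{j ≤ m} g_j` into homogeneous components. Along `x_k = r_k y_k` with `r_k → ∞`
and `y_k → v`, homogeneity gives `g(x_k) / r_k ^ m = ∑_j r_k^(j-m) g_j(y_k) → g_m(v)`, so if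
`g(x_k) → 0` then `g_m(v) = 0`. Apply this to `g = ∂f/∂x_i`, which has degree at most `d - 1`
and whose component of degree `d - 1` is `∂f_d/∂x_i`.
-/

namespace MvPolynomial

variable {σ R : Type*} [CommSemiring R]

theorem IsHomogeneous.eval_smul {φ : MvPolynomial σ R} {m : ℕ} (hφ : φ.IsHomogeneous m)
    (c : R) (x : σ → R) : eval (c • x) φ = c ^ m * eval x φ := by
  rw [eval_eq, eval_eq, Finset.mul_sum]
  refine Finset.sum_congr rfl fun s hs => ?_
  have hs : s.degree = m := by
    rw [Finsupp.degree_eq_weight_one]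
    exact hφ (mem_support_iff.mp hs)
  simp only [Pi.smul_apply, smul_eq_mul, mul_pow, Finset.prod_mul_distrib,
    Finset.prod_pow_eq_pow_sum, ← Finsupp.degree_apply, hs]
  ring

theorem pderiv_homogeneousComponent_succ (i : σ) (d : ℕ) (f : MvPolynomial σ R) :
    pderiv i (homogeneousComponent (d + 1) f) = homogeneousComponent d (pderiv i f) := by
  ext s
  simp only [coeff_pderiv, coeff_homogeneousComponent, map_add, Finsupp.degree_single]
  split_ifs <;> simp_all

theorem totalDegree_pderiv_le (i : σ) (f : MvPolynomial σ R) :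
    (pderiv i f).totalDegree ≤ f.totalDegree - 1 := by
  refine Finset.sup_le fun s hs => ?_
  have hs' : s + Finsupp.single i 1 ∈ f.support := by
    rw [mem_support_iff, coeff_pderiv] at hs
    exact mem_support_iff.mpr (left_ne_zero_of_mul hs)
  have := le_totalDegree hs'
  rw [Finsupp.sum_add_index' (fun _ => rfl) (fun _ _ _ => rfl), Finsupp.sum_single_index rfl]
    at this
  omega

variable {ι : Type*} {l : Filter ι}

theorem tendsto_eval_smul_div_pow {g : MvPolynomial σ ℝ} {m : ℕ} (hg : g.totalDegree ≤ m)
    {r : ι → ℝ} (hr : Tendsto r l atTop) {y : ι → σ → ℝ} {v : σ → ℝ} (hy : Tendsto y l (𝓝 v)) :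
    Tendsto (fun k => eval (r k • y k) g / r k ^ m) l (𝓝 (eval v (homogeneousComponent m g))) := by
  have hsum : g = ∑ j ∈ Finset.range (m + 1), homogeneousComponent j g := by
    conv_lhs => rw [← sum_homogeneousComponent g]
    refine Finset.sum_subset (Finset.range_subset_range.mpr (by omega)) fun j _ hj => ?_
    exact homogeneousComponent_eq_zero _ _ (by simp at hj; omega)
  have hexpand : (fun k => ∑ j ∈ Finset.range (m + 1),
      (r k)⁻¹ ^ (m - j) * eval (y k) (homogeneousComponent j g)) =ᶠ[l]
      fun k => eval (r k • y k) g / r k ^ m := by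
    filter_upwards [hr.eventually_ne_atTop 0] with k hk
    conv_rhs => rw [hsum, map_sum, Finset.sum_div]
    refine Finset.sum_congr rfl fun j hj => ?_
    rw [(homogeneousComponent_isHomogeneous j g).eval_smul,
      ← pow_sub_mul_pow (r k) (by simpa [Nat.lt_succ_iff] using hj : j ≤ m),
      mul_comm (r k ^ (m - j)), ← div_div, mul_div_cancel_left₀ _ (pow_ne_zero j hk), inv_pow,
      inv_mul_eq_div]
  have hlim := tendsto_finsetSum (Finset.range (m + 1)) fun j _ =>
    ((tendsto_inv_atTop_zero.comp hr).pow (m - j)).mul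
      (((continuous_eval (homogeneousComponent j g)).tendsto v).comp hy)
  refine (hlim.congr' hexpand).trans (le_of_eq ?_)
  rw [Finset.sum_eq_single_of_mem m (by simp) fun j hj hjm => ?_]
  · simp
  · simp [zero_pow (by simp at hj; omega : m - j ≠ 0)]

theorem eval_homogeneousComponent_eq_zero_of_tendsto [l.NeBot] {g : MvPolynomial σ ℝ} {m : ℕ}
    (hg : g.totalDegree ≤ m) {r : ι → ℝ} (hr : Tendsto r l atTop) {z : ι → σ → ℝ} {v : σ → ℝ}
    (hdir : Tendsto (fun k => (r k)⁻¹ • z k) l (𝓝 v))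
    (hz : Tendsto (fun k => eval (z k) g) l (𝓝 0)) :
    eval v (homogeneousComponent m g) = 0 := by
  have hscaled : Tendsto (fun k => eval (r k • (r k)⁻¹ • z k) g / r k ^ m) l (𝓝 0) := by
    refine (((tendsto_inv_atTop_zero.comp hr).pow m).mul hz).congr' ?_ |>.trans (by simp)
    filter_upwards [hr.eventually_ne_atTop 0] with k hk
    simp [smul_smul, hk, div_eq_inv_mul]
  exact tendsto_nhds_unique (tendsto_eval_smul_div_pow hg hr hdir) hscaled

end MvPolynomial

theorem statement0_general {n : ℕ} (f : MvPolynomial (Fin n) ℝ) (d : ℕ) (hd : 2 ≤ d)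
    (hdeg : f.totalDegree = d)
    (x : ℕ → EuclideanSpace ℝ (Fin n)) (u : EuclideanSpace ℝ (Fin n))
    (hnorm : Tendsto (fun k => ‖x k‖) atTop atTop)
    (hdir : Tendsto (fun k => (‖x k‖)⁻¹ • x k) atTop (𝓝 u))
    (hgrad : Tendsto (fun k => ‖pgrad f (x k)‖) atTop (𝓝 0)) :
    pgrad (homogeneousComponent d f) u = 0 := by
  set e := EuclideanSpace.equiv (Fin n) ℝ
  obtain ⟨m, rfl⟩ : ∃ m, d = m + 1 := ⟨d - 1, by omega⟩
  have hgrad0 : Tendsto (fun k => pgrad f (x k)) atTop (𝓝 0) :=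
    tendsto_zero_iff_norm_tendsto_zero.mpr hgrad
  ext i
  show eval (e u) (pderiv i (homogeneousComponent (m + 1) f)) = 0
  rw [pderiv_homogeneousComponent_succ]
  refine eval_homogeneousComponent_eq_zero_of_tendsto
    ((totalDegree_pderiv_le i f).trans (by omega)) hnorm (z := fun k => e (x k)) ?_ ?_
  · simpa only [Function.comp_def, map_smul] using (e.continuous.tendsto u).comp hdir
  · simpa [Function.comp_def, pgrad, e] using
      ((EuclideanSpace.proj i).continuous.tendsto 0).comp hgrad0

/-- If `f : ℝⁿ → ℝ` is a polynomial of degree `d ≥ 2` and `(x_k)` is a sequence with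
`‖x_k‖ → ∞`, `x_k/‖x_k‖ → u` (`u` a unit vector) and `‖∇f(x_k)‖ → 0`, then `∇f_d(u) = 0`. -/
theorem statement0 {n : ℕ} (f : MvPolynomial (Fin n) ℝ) (d : ℕ) (hd : 2 ≤ d)
    (hdeg : f.totalDegree = d)
    (x : ℕ → EuclideanSpace ℝ (Fin n)) (u : EuclideanSpace ℝ (Fin n)) (hu : ‖u‖ = 1)
    (hnorm : Tendsto (fun k => ‖x k‖) atTop atTop)
    (hdir : Tendsto (fun k => (‖x k‖)⁻¹ • x k) atTop (𝓝 u))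
    (hgrad : Tendsto (fun k => ‖pgrad f (x k)‖) atTop (𝓝 0)) :
    pgrad (homogeneousComponent d f) u = 0 :=
  statement0_general f d hd hdeg x u hnorm hdir hgrad
end

section
/- Let f : ℝⁿ → ℝ be a C¹ function, b ∈ ℝ, ε > 0 and A, C > 0. Then there is no C¹ curve α : [−ε, 0) → ℝⁿ ∖ {0} satisfying all of the following: f(α(s)) = s + b for all s; ‖α(s)‖ → +∞ as s → 0⁻; ‖α(s)‖·‖∇f(α(s))‖ ≥ C for all s; |⟨∇f(α(s)), α(s)⟩| ≥ A·‖∇f(α(s))‖·‖α(s)‖ for all s; and ⟨α′(s)/‖α′(s)‖, α(s)/‖α(s)‖⟩ → 1 as s → 0⁻. -/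
/-!
Along the curve, `⟪∇f(α s), α' s⟫ = 1`. Once `α'` is nearly parallel to `α`, the radial part
of `∇f` makes `|⟪∇f(α s), α' s / ‖α' s‖⟫| ≥ (A/2)‖∇f(α s)‖`, hence
`‖α' s‖ ≤ 2 / (A ‖∇f(α s)‖) ≤ 2‖α s‖ / (A C)`. A linear bound `‖α'‖ ≤ K‖α‖` on the bounded
interval `[a, 0)` keeps `‖α‖` bounded by Gronwall, contradicting `‖α s‖ → ∞`.
-/

open Filter Topology Set
open scoped RealInnerProductSpace

section Gronwall

variable {E : Type*} [NormedAddCommGroup E] [NormedSpace ℝ E] {α α' : ℝ → E} {K a b : ℝ}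

theorem norm_le_mul_exp_of_norm_deriv_le (hK : 0 ≤ K)
    (hderiv : ∀ s ∈ Ico a b, HasDerivAt α (α' s) s)
    (hbound : ∀ s ∈ Ico a b, ‖α' s‖ ≤ K * ‖α s‖) :
    ∀ s ∈ Ico a b, ‖α s‖ ≤ ‖α a‖ * Real.exp (K * (b - a)) := by
  intro s hs
  have hsub : Ico a s ⊆ Ico a b := Ico_subset_Ico_right hs.2.le
  have hcont : ContinuousOn α (Icc a s) := fun t ht =>
    (hderiv t ⟨ht.1, ht.2.trans_lt hs.2⟩).continuousAt.continuousWithinAt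
  have hgron := norm_le_gronwallBound_of_norm_deriv_right_le (ε := 0) hcont
    (fun t ht => (hderiv t (hsub ht)).hasDerivWithinAt) le_rfl
    (fun t ht => by simpa using hbound t (hsub ht)) s (right_mem_Icc.2 hs.1)
  rw [gronwallBound_ε0] at hgron
  refine hgron.trans (mul_le_mul_of_nonneg_left ?_ (norm_nonneg _))
  exact Real.exp_le_exp.2 (mul_le_mul_of_nonneg_left (by linarith [hs.2]) hK)

theorem not_tendsto_norm_atTop_of_norm_deriv_le (hab : a < b) (hK : 0 ≤ K)
    (hderiv : ∀ s ∈ Ico a b, HasDerivAt α (α' s) s)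
    (hbound : ∀ s ∈ Ico a b, ‖α' s‖ ≤ K * ‖α s‖) :
    ¬ Tendsto (fun s => ‖α s‖) (𝓝[<] b) atTop := by
  intro hinf
  obtain ⟨s, hs, hbig⟩ := (eventually_mem_set.2 (Ico_mem_nhdsLT hab)).and
    (hinf.eventually_gt_atTop (‖α a‖ * Real.exp (K * (b - a)))) |>.exists
  exact (norm_le_mul_exp_of_norm_deriv_le hK hderiv hbound s hs).not_gt hbig

end Gronwall

section InnerProduct

variable {E : Type*} [NormedAddCommGroup E] [InnerProductSpace ℝ E]

theorem norm_sub_le_of_one_sub_le_inner {u v : E} {r : ℝ} (hu : ‖u‖ = 1) (hv : ‖v‖ = 1)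
    (hr : 0 ≤ r) (h : 1 - r ^ 2 / 2 ≤ ⟪u, v⟫) : ‖u - v‖ ≤ r := by
  refine pow_le_pow_iff_left₀ (norm_nonneg _) hr two_ne_zero |>.1 ?_
  rw [norm_sub_sq_real, hu, hv]
  linarith

theorem abs_inner_le_of_norm_sub_le {g u v : E} {r : ℝ} (h : ‖u - v‖ ≤ r) :
    |⟪g, v⟫| ≤ |⟪g, u⟫| + ‖g‖ * r := by
  have hsplit : ⟪g, v⟫ = ⟪g, u⟫ - ⟪g, u - v⟫ := by rw [inner_sub_right]; ring
  calc |⟪g, v⟫| ≤ |⟪g, u⟫| + |⟪g, u - v⟫| := hsplit ▸ abs_sub _ _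
    _ ≤ |⟪g, u⟫| + ‖g‖ * ‖u - v‖ := by gcongr; exact abs_real_inner_le_norm _ _
    _ ≤ |⟪g, u⟫| + ‖g‖ * r := by gcongr

theorem mul_norm_le_of_inner_eq_one {g y v : E} {A : ℝ} (hA : 0 ≤ A) (hv : ‖v‖ = 1)
    (hgy : ⟪g, y⟫ = 1) (hgv : A * ‖g‖ ≤ |⟪g, v⟫|)
    (hangle : 1 - A ^ 2 / 8 ≤ ⟪‖y‖⁻¹ • y, v⟫) : A / 2 * ‖g‖ * ‖y‖ ≤ 1 := by
  have hy : y ≠ 0 := by rintro rfl; simp at hgy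
  have hdist : ‖‖y‖⁻¹ • y - v‖ ≤ A / 2 :=
    norm_sub_le_of_one_sub_le_inner (norm_smul_inv_norm hy) hv (by positivity)
      (by convert hangle using 2; ring)
  have hgu : A / 2 * ‖g‖ ≤ |⟪g, ‖y‖⁻¹ • y⟫| := by
    linarith [abs_inner_le_of_norm_sub_le (g := g) hdist]
  have hyu : |⟪g, ‖y‖⁻¹ • y⟫| * ‖y‖ = 1 := by
    rw [real_inner_smul_right, hgy, mul_one, abs_inv, abs_norm,
      inv_mul_cancel₀ (norm_ne_zero_iff.2 hy)]
  calc A / 2 * ‖g‖ * ‖y‖ ≤ |⟪g, ‖y‖⁻¹ • y⟫| * ‖y‖ := by gcongr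
    _ = 1 := hyu

theorem norm_le_of_inner_eq_one {g x y : E} {A C : ℝ} (hA : 0 < A) (hC : 0 < C)
    (hgy : ⟪g, y⟫ = 1) (hmal : C ≤ ‖x‖ * ‖g‖) (hrad : A * (‖g‖ * ‖x‖) ≤ |⟪g, x⟫|)
    (hangle : 1 - A ^ 2 / 8 ≤ ⟪‖y‖⁻¹ • y, ‖x‖⁻¹ • x⟫) :
    ‖y‖ ≤ 2 / (A * C) * ‖x‖ := by
  have hx : 0 < ‖x‖ := by
    by_contra! h
    nlinarith [norm_nonneg x, norm_nonneg g]
  have hgv : A * ‖g‖ ≤ |⟪g, ‖x‖⁻¹ • x⟫| := by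
    rw [real_inner_smul_right, abs_mul, abs_inv, abs_norm, le_inv_mul_iff₀ hx]
    linarith
  have hspeed := mul_norm_le_of_inner_eq_one hA.le (norm_smul_inv_norm (norm_pos_iff.1 hx))
    hgy hgv hangle
  rw [div_mul_eq_mul_div, le_div_iff₀ (by positivity)]
  calc ‖y‖ * (A * C) ≤ ‖y‖ * (A * (‖x‖ * ‖g‖)) := by gcongr
    _ = 2 * ‖x‖ * (A / 2 * ‖g‖ * ‖y‖) := by ring
    _ ≤ 2 * ‖x‖ := mul_le_of_le_one_right (by positivity) hspeed

end InnerProduct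

theorem inner_gradient_eq_one_of_comp_eventuallyEq {E : Type*} [NormedAddCommGroup E]
    [InnerProductSpace ℝ E] [CompleteSpace E] {f : E → ℝ} {γ : ℝ → E} {γ' : E} {s b : ℝ}
    (hf : DifferentiableAt ℝ f (γ s)) (hγ : HasDerivAt γ γ' s)
    (hfγ : ∀ᶠ t in 𝓝 s, f (γ t) = t + b) :
    ⟪gradient f (γ s), γ'⟫ = 1 := by
  have hchain : HasDerivAt (fun t => f (γ t)) ⟪gradient f (γ s), γ'⟫ s :=
    (hf.hasGradientAt.hasFDerivAt.comp_hasDerivAt s hγ).congr_deriv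
      InnerProductSpace.toDual_apply_apply
  exact hchain.unique <| ((hasDerivAt_id s).add_const b).congr_of_eventuallyEq hfγ

theorem statement12_general {n : ℕ} (f : EuclideanSpace ℝ (Fin n) → ℝ) (hf : ContDiff ℝ 1 f)
    (b ε A C : ℝ) (hε : 0 < ε) (hA : 0 < A) (hC : 0 < C)
    (α α' : ℝ → EuclideanSpace ℝ (Fin n))
    (hderiv : ∀ s ∈ Set.Ico (-ε) (0:ℝ), HasDerivAt α (α' s) s)
    (hfα : ∀ s ∈ Set.Ico (-ε) (0:ℝ), f (α s) = s + b)
    (hinf : Tendsto (fun s => ‖α s‖) (𝓝[<] (0:ℝ)) atTop)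
    (hmal : ∀ s ∈ Set.Ico (-ε) (0:ℝ), C ≤ ‖α s‖ * ‖gradient f (α s)‖)
    (hrad : ∀ s ∈ Set.Ico (-ε) (0:ℝ),
      A * (‖gradient f (α s)‖ * ‖α s‖) ≤ |⟪gradient f (α s), α s⟫|)
    (hlim : Tendsto (fun s => ⟪(‖α' s‖)⁻¹ • α' s, (‖α s‖)⁻¹ • α s⟫)
      (𝓝[<] (0:ℝ)) (𝓝 1)) :
    False := by
  have hangle : ∀ᶠ s in 𝓝[<] (0:ℝ), 1 - A ^ 2 / 8 ≤ ⟪‖α' s‖⁻¹ • α' s, ‖α s‖⁻¹ • α s⟫ :=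
    hlim.eventually (eventually_ge_nhds (by nlinarith))
  obtain ⟨a, ha, hsub⟩ := mem_nhdsLT_iff_exists_Ico_subset.1
    (hangle.and (Ioo_mem_nhdsLT (neg_lt_zero.2 hε)))
  have hIco : ∀ s ∈ Ico a 0, s ∈ Ico (-ε) 0 := fun s hs => Ioo_subset_Ico_self (hsub hs).2
  have hone : ∀ s ∈ Ico a 0, ⟪gradient f (α s), α' s⟫ = 1 := fun s hs =>
    inner_gradient_eq_one_of_comp_eventuallyEq (hf.differentiable one_ne_zero _)
      (hderiv s (hIco s hs)) <| eventually_of_mem (isOpen_Ioo.mem_nhds (hsub hs).2)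
        fun t ht => hfα t (Ioo_subset_Ico_self ht)
  have hspeed : ∀ s ∈ Ico a 0, ‖α' s‖ ≤ 2 / (A * C) * ‖α s‖ := fun s hs =>
    norm_le_of_inner_eq_one hA hC (hone s hs) (hmal s (hIco s hs)) (hrad s (hIco s hs))
      (hsub hs).1
  exact not_tendsto_norm_atTop_of_norm_deriv_le ha (by positivity)
    (fun s hs => hderiv s (hIco s hs)) hspeed hinf

/-- Let `f : ℝⁿ → ℝ` be `C¹`, `b ∈ ℝ`, `ε > 0`, `A, C > 0`.  There is no `C¹` curve
`α : [−ε, 0) → ℝⁿ ∖ {0}` with `f(α(s)) = s + b`, `‖α(s)‖ → ∞` as `s → 0⁻`,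
`‖α(s)‖·‖∇f(α(s))‖ ≥ C`, `|⟨∇f(α(s)), α(s)⟩| ≥ A‖∇f(α(s))‖·‖α(s)‖`, and
`⟨α′(s)/‖α′(s)‖, α(s)/‖α(s)‖⟩ → 1` as `s → 0⁻`. -/
theorem statement12 {n : ℕ} (f : EuclideanSpace ℝ (Fin n) → ℝ) (hf : ContDiff ℝ 1 f)
    (b ε A C : ℝ) (hε : 0 < ε) (hA : 0 < A) (hC : 0 < C)
    (α α' : ℝ → EuclideanSpace ℝ (Fin n))
    (hderiv : ∀ s ∈ Set.Ico (-ε) (0:ℝ), HasDerivAt α (α' s) s)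
    (hC1 : ContinuousOn α' (Set.Ico (-ε) 0))
    (hne : ∀ s ∈ Set.Ico (-ε) (0:ℝ), α s ≠ 0)
    (hfα : ∀ s ∈ Set.Ico (-ε) (0:ℝ), f (α s) = s + b)
    (hinf : Tendsto (fun s => ‖α s‖) (𝓝[<] (0:ℝ)) atTop)
    (hmal : ∀ s ∈ Set.Ico (-ε) (0:ℝ), C ≤ ‖α s‖ * ‖gradient f (α s)‖)
    (hrad : ∀ s ∈ Set.Ico (-ε) (0:ℝ),
      A * (‖gradient f (α s)‖ * ‖α s‖) ≤ |⟪gradient f (α s), α s⟫|)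
    (hlim : Tendsto (fun s => ⟪(‖α' s‖)⁻¹ • α' s, (‖α s‖)⁻¹ • α s⟫)
      (𝓝[<] (0:ℝ)) (𝓝 1)) :
    False :=
  statement12_general f hf b ε A C hε hA hC α α' hderiv hfα hinf hmal hrad hlim
end

section
/- Let f : ℝⁿ → ℝ be a C¹ function, b ∈ ℝ, ε > 0 and A > 0, and let θ : (0, ε] → (0, +∞) be a continuous function with ∫₀^ε dt/θ(t) < +∞. Suppose α : [−ε, 0) → ℝⁿ ∖ {0} is a C¹ curve satisfying: f(α(s)) = s + b for all s; ‖α(s)‖·‖∇f(α(s))‖ ≥ θ(−s) for all s; |⟨∇f(α(s)), α(s)⟩| ≥ A·‖∇f(α(s))‖·‖α(s)‖ for all s; and ⟨α′(s)/‖α′(s)‖, α(s)/‖α(s)‖⟩ → 1 as s → 0⁻. Then ‖α(s)‖ is bounded on [−ε, 0); in particular ‖α(s)‖ does not tend to +∞ as s → 0⁻. -/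
open Filter Topology MeasureTheory
open scoped RealInnerProductSpace

/-!
Near `0` the unit tangent `α'/‖α'‖` is within distance `A/2` of the unit radial vector
`α/‖α‖`, on which the gradient has component at least `A‖∇f(α)‖` in absolute value. So the
chain rule identity `⟪∇f(α), α'⟫ = 1` forces `‖α'‖ ≤ 2/(A‖∇f(α)‖)`, and then
`(log ‖α‖²)' ≤ 2‖α'‖/‖α‖ ≤ 4/(A‖α‖‖∇f(α)‖) ≤ 4/(A θ(-s))`. The right-hand side is integrable
up to `0`, so `log ‖α‖²` is bounded above near `0`; away from `0`, continuity on a compact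
interval bounds `‖α‖`.
-/

open Set

section Geometry

variable {E : Type*} [NormedAddCommGroup E] [InnerProductSpace ℝ E]

lemma norm_sub_le_of_one_sub_lt_inner {u v : E} (hu : ‖u‖ = 1) (hv : ‖v‖ = 1) {δ : ℝ}
    (hδ : 0 ≤ δ) (h : 1 - δ ^ 2 / 2 < ⟪v, u⟫) : ‖v - u‖ ≤ δ := by
  have hsq : ‖v - u‖ ^ 2 ≤ δ ^ 2 := by
    rw [norm_sub_sq_real, hu, hv]
    linarith
  exact (pow_le_pow_iff_left₀ (norm_nonneg _) hδ two_ne_zero).mp hsq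

lemma norm_le_of_inner_eq_one_s13 {G a v : E} {A : ℝ} (hA : 0 < A) (ha : a ≠ 0)
    (hGv : ⟪G, v⟫ = 1) (hrad : A * (‖G‖ * ‖a‖) ≤ |⟪G, a⟫|)
    (hang : 1 - A ^ 2 / 8 < ⟪‖v‖⁻¹ • v, ‖a‖⁻¹ • a⟫) :
    ‖v‖ ≤ 2 / (A * ‖G‖) := by
  have hG : G ≠ 0 := by rintro rfl; simp at hGv
  have hv : v ≠ 0 := by rintro rfl; simp at hGv
  set u := ‖a‖⁻¹ • a
  set w := ‖v‖⁻¹ • v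
  have hwu : ‖w - u‖ ≤ A / 2 :=
    norm_sub_le_of_one_sub_lt_inner (by simpa using norm_smul_inv_norm (𝕜 := ℝ) ha)
      (by simpa using norm_smul_inv_norm (𝕜 := ℝ) hv) (by positivity) (by linarith)
  have hGu : A * ‖G‖ ≤ |⟪G, u⟫| := by
    have hapos : 0 < ‖a‖ := norm_pos_iff.mpr ha
    rw [real_inner_smul_right, abs_mul, abs_inv, abs_norm, le_inv_mul_iff₀ hapos]
    linarith
  have hGw : ⟪G, w⟫ = ‖v‖⁻¹ := by rw [real_inner_smul_right, hGv, mul_one]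
  have hlow : A * ‖G‖ / 2 ≤ ‖v‖⁻¹ :=
    calc A * ‖G‖ / 2 = A * ‖G‖ - ‖G‖ * (A / 2) := by ring
      _ ≤ |⟪G, u⟫| - ‖G‖ * ‖w - u‖ := by gcongr
      _ ≤ |⟪G, u⟫| - |⟪G, w - u⟫| := by gcongr; exact abs_real_inner_le_norm _ _
      _ ≤ |⟪G, w⟫| := by
        rw [inner_sub_right, abs_sub_comm]
        linarith [abs_sub_abs_le_abs_sub ⟪G, u⟫ ⟪G, w⟫]
      _ = ‖v‖⁻¹ := by rw [hGw, abs_of_nonneg (by positivity)]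
  calc ‖v‖ = (‖v‖⁻¹)⁻¹ := (inv_inv _).symm
    _ ≤ (A * ‖G‖ / 2)⁻¹ := inv_anti₀ (by positivity) hlow
    _ = 2 / (A * ‖G‖) := inv_div _ _

lemma two_inner_div_norm_sq_le {G a v : E} {A θ : ℝ} (hA : 0 < A) (ha : a ≠ 0)
    (hGv : ⟪G, v⟫ = 1) (hrad : A * (‖G‖ * ‖a‖) ≤ |⟪G, a⟫|)
    (hang : 1 - A ^ 2 / 8 < ⟪‖v‖⁻¹ • v, ‖a‖⁻¹ • a⟫) (hθ : 0 < θ) (hθa : θ ≤ ‖a‖ * ‖G‖) :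
    2 * ⟪a, v⟫ / ‖a‖ ^ 2 ≤ 4 / A * θ⁻¹ := by
  have hapos : 0 < ‖a‖ := norm_pos_iff.mpr ha
  calc 2 * ⟪a, v⟫ / ‖a‖ ^ 2 ≤ 2 * (‖a‖ * ‖v‖) / ‖a‖ ^ 2 := by
        gcongr; exact real_inner_le_norm _ _
    _ = 2 * ‖v‖ / ‖a‖ := by field_simp
    _ ≤ 2 * (2 / (A * ‖G‖)) / ‖a‖ := by gcongr; exact norm_le_of_inner_eq_one_s13 hA ha hGv hrad hang
    _ = 4 / (A * (‖a‖ * ‖G‖)) := by field_simp; ring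
    _ ≤ 4 / (A * θ) := by gcongr
    _ = 4 / A * θ⁻¹ := by field_simp

lemma inner_gradient_eq_one_of_eventuallyEq [CompleteSpace E] {f : E → ℝ} {γ : ℝ → E} {γ' : E}
    {s b : ℝ} (hf : DifferentiableAt ℝ f (γ s)) (hγ : HasDerivAt γ γ' s)
    (hfγ : (fun t => f (γ t)) =ᶠ[𝓝 s] fun t => t + b) :
    ⟪gradient f (γ s), γ'⟫ = 1 := by
  have hcomp : HasDerivAt (fun t => f (γ t))
      (InnerProductSpace.toDual ℝ E (gradient f (γ s)) γ') s :=
    hf.hasGradientAt.hasFDerivAt.comp_hasDerivAt s hγ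
  rw [InnerProductSpace.toDual_apply_apply] at hcomp
  exact (hfγ.hasDerivAt_iff.mp hcomp).unique ((hasDerivAt_id s).add_const b)

end Geometry

lemma le_add_integral_of_hasDerivAt_le {φ φ' g : ℝ → ℝ} {a : ℝ}
    (hφ : ∀ x ∈ Ico a 0, HasDerivAt φ (φ' x) x) (hle : ∀ x ∈ Ico a 0, φ' x ≤ g (-x))
    (hg0 : ∀ t ∈ Ioc 0 (-a), 0 ≤ g t) (hg : IntervalIntegrable g volume 0 (-a)) :
    ∀ s ∈ Ico a 0, φ s ≤ φ a + ∫ t in (0)..(-a), g t := by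
  intro s hs
  have hsub : Icc a s ⊆ Ico a 0 := Icc_subset_Ico_right hs.2
  have hgneg : IntegrableOn (fun x => g (-x)) (Icc a s) := by
    have hneg : IntervalIntegrable (fun x => g (-x)) volume a 0 := by
      simpa using (IntervalIntegrable.iff_comp_neg).mp hg.symm
    exact ((intervalIntegrable_iff_integrableOn_Icc_of_le (hs.1.trans hs.2.le)).mp hneg).mono_set
      (Icc_subset_Icc_right hs.2.le)
  have hFTC : φ s - φ a ≤ ∫ x in a..s, g (-x) :=
    intervalIntegral.sub_le_integral_of_hasDeriv_right_of_le hs.1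
      (fun x hx => (hφ x (hsub hx)).continuousAt.continuousWithinAt)
      (fun x hx => (hφ x (hsub (Ioo_subset_Icc_self hx))).hasDerivWithinAt) hgneg
      (fun x hx => hle x (hsub (Ioo_subset_Icc_self hx)))
  have hmono : ∫ t in (-s)..(-a), g t ≤ ∫ t in (0)..(-a), g t :=
    intervalIntegral.integral_mono_interval (by linarith [hs.2]) (by linarith [hs.1]) le_rfl
      ((ae_restrict_iff' measurableSet_Ioc).mpr (ae_of_all _ hg0)) hg
  rw [intervalIntegral.integral_comp_neg (fun t => g t)] at hFTC
  linarith

lemma exists_forall_le_of_continuousOn_Ico {g : ℝ → ℝ} {a b c B : ℝ}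
    (hg : ContinuousOn g (Ico a c)) (hb : b < c) (hB : ∀ s ∈ Ico b c, g s ≤ B) :
    ∃ M, ∀ s ∈ Ico a c, g s ≤ M := by
  obtain ⟨M₀, hM₀⟩ := isCompact_Icc.bddAbove_image (hg.mono (Icc_subset_Ico_right hb))
  refine ⟨max M₀ B, fun s hs => ?_⟩
  rcases le_or_gt s b with h | h
  · exact le_max_of_le_left (hM₀ ⟨s, ⟨hs.1, h⟩, rfl⟩)
  · exact le_max_of_le_right (hB s ⟨h.le, hs.2⟩)

lemma not_tendsto_atTop_of_forall_le {g : ℝ → ℝ} {a c M : ℝ} (ha : a < c)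
    (hM : ∀ s ∈ Ico a c, g s ≤ M) : ¬ Tendsto g (𝓝[<] c) atTop := by
  intro hT
  have hnear : ∀ᶠ s in 𝓝[<] c, s ∈ Ioo a c := Ioo_mem_nhdsLT ha
  obtain ⟨s, hs, hlt⟩ := (hnear.and (hT.eventually_gt_atTop M)).exists
  exact (hM s ⟨hs.1.le, hs.2⟩).not_gt hlt

theorem statement13_general {n : ℕ} (f : EuclideanSpace ℝ (Fin n) → ℝ) (hf : ContDiff ℝ 1 f)
    (b ε A : ℝ) (hε : 0 < ε) (hA : 0 < A)
    (θ : ℝ → ℝ) (hθpos : ∀ t ∈ Set.Ioc (0:ℝ) ε, 0 < θ t)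
    (hθint : IntervalIntegrable (fun t => (θ t)⁻¹) volume 0 ε)
    (α α' : ℝ → EuclideanSpace ℝ (Fin n))
    (hderiv : ∀ s ∈ Set.Ico (-ε) (0:ℝ), HasDerivAt α (α' s) s)
    (hne : ∀ s ∈ Set.Ico (-ε) (0:ℝ), α s ≠ 0)
    (hfα : ∀ s ∈ Set.Ico (-ε) (0:ℝ), f (α s) = s + b)
    (hmal : ∀ s ∈ Set.Ico (-ε) (0:ℝ), θ (-s) ≤ ‖α s‖ * ‖gradient f (α s)‖)
    (hrad : ∀ s ∈ Set.Ico (-ε) (0:ℝ),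
      A * (‖gradient f (α s)‖ * ‖α s‖) ≤ |⟪gradient f (α s), α s⟫|)
    (hlim : Tendsto (fun s => ⟪(‖α' s‖)⁻¹ • α' s, (‖α s‖)⁻¹ • α s⟫)
      (𝓝[<] (0:ℝ)) (𝓝 1)) :
    (∃ M : ℝ, ∀ s ∈ Set.Ico (-ε) (0:ℝ), ‖α s‖ ≤ M) ∧
      ¬ Tendsto (fun s => ‖α s‖) (𝓝[<] (0:ℝ)) atTop := by
  obtain ⟨s₁, hs₁, hnear⟩ := mem_nhdsLT_iff_exists_Ico_subset.mp
    ((hlim.eventually (eventually_gt_nhds (by nlinarith : 1 - A ^ 2 / 8 < 1))).and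
      (Ioo_mem_nhdsLT (neg_lt_zero.mpr hε)))
  have hIco : Ico s₁ 0 ⊆ Ico (-ε) 0 := fun s hs => ⟨(hnear hs).2.1.le, hs.2⟩
  have hs₁ε : -s₁ ≤ ε := neg_le.mp (hIco ⟨le_rfl, hs₁⟩).1
  have hlog : ∀ s ∈ Ico s₁ 0, HasDerivAt (fun r => Real.log (‖α r‖ ^ 2))
      (2 * ⟪α s, α' s⟫ / ‖α s‖ ^ 2) s := fun s hs =>
    (hderiv s (hIco hs)).norm_sq.log (pow_ne_zero 2 (norm_ne_zero_iff.mpr (hne s (hIco hs))))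
  have hlog_le : ∀ s ∈ Ico s₁ 0, 2 * ⟪α s, α' s⟫ / ‖α s‖ ^ 2 ≤ 4 / A * (θ (-s))⁻¹ := by
    intro s hs
    obtain ⟨hang, hsε, -⟩ := hnear hs
    have hs' := hIco hs
    have hGv : ⟪gradient f (α s), α' s⟫ = 1 :=
      inner_gradient_eq_one_of_eventuallyEq (hf.differentiable one_ne_zero _) (hderiv s hs')
        (eventually_of_mem (Ioo_mem_nhds hsε hs.2) fun t ht => hfα t ⟨ht.1.le, ht.2⟩)
    exact two_inner_div_norm_sq_le hA (hne s hs') hGv (hrad s hs') hang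
      (hθpos _ ⟨by linarith [hs.2], by linarith⟩) (hmal s hs')
  have htail := le_add_integral_of_hasDerivAt_le hlog hlog_le
    (fun t ht => by have := hθpos t (Ioc_subset_Ioc_right hs₁ε ht); positivity)
    ((hθint.mono_set (uIcc_subset_uIcc left_mem_uIcc
      (mem_uIcc_of_le (neg_nonneg.mpr hs₁.le) hs₁ε))).const_mul (4 / A))
  set B := Real.log (‖α s₁‖ ^ 2) + ∫ t in (0)..(-s₁), 4 / A * (θ t)⁻¹
  have hbound : ∀ s ∈ Ico s₁ 0, ‖α s‖ ≤ √(Real.exp B) := fun s hs =>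
    (Real.le_sqrt (norm_nonneg _) (Real.exp_nonneg _)).mpr <|
      (Real.log_le_iff_le_exp (by simp [hne s (hIco hs)])).mp (htail s hs)
  obtain ⟨M, hM⟩ := exists_forall_le_of_continuousOn_Ico
    (fun s hs => (hderiv s hs).continuousAt.norm.continuousWithinAt) hs₁ hbound
  exact ⟨⟨M, hM⟩, not_tendsto_atTop_of_forall_le (neg_lt_zero.mpr hε) hM⟩

/-- Let `f : ℝⁿ → ℝ` be `C¹`, `b ∈ ℝ`, `ε > 0`, `A > 0`, and let `θ : (0, ε] → (0, ∞)` be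
continuous with `∫₀^ε dt/θ(t) < ∞`.  If `α : [−ε, 0) → ℝⁿ ∖ {0}` is a `C¹` curve with
`f(α(s)) = s + b`, `‖α(s)‖·‖∇f(α(s))‖ ≥ θ(−s)`,
`|⟨∇f(α(s)), α(s)⟩| ≥ A‖∇f(α(s))‖·‖α(s)‖`, and
`⟨α′(s)/‖α′(s)‖, α(s)/‖α(s)‖⟩ → 1` as `s → 0⁻`, then `‖α(s)‖` is bounded on `[−ε, 0)`;
in particular `‖α(s)‖` does not tend to `+∞` as `s → 0⁻`. -/
theorem statement13 {n : ℕ} (f : EuclideanSpace ℝ (Fin n) → ℝ) (hf : ContDiff ℝ 1 f)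
    (b ε A : ℝ) (hε : 0 < ε) (hA : 0 < A)
    (θ : ℝ → ℝ) (hθpos : ∀ t ∈ Set.Ioc (0:ℝ) ε, 0 < θ t)
    (hθcont : ContinuousOn θ (Set.Ioc (0:ℝ) ε))
    (hθint : IntervalIntegrable (fun t => (θ t)⁻¹) volume 0 ε)
    (α α' : ℝ → EuclideanSpace ℝ (Fin n))
    (hderiv : ∀ s ∈ Set.Ico (-ε) (0:ℝ), HasDerivAt α (α' s) s)
    (hC1 : ContinuousOn α' (Set.Ico (-ε) 0))
    (hne : ∀ s ∈ Set.Ico (-ε) (0:ℝ), α s ≠ 0)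
    (hfα : ∀ s ∈ Set.Ico (-ε) (0:ℝ), f (α s) = s + b)
    (hmal : ∀ s ∈ Set.Ico (-ε) (0:ℝ), θ (-s) ≤ ‖α s‖ * ‖gradient f (α s)‖)
    (hrad : ∀ s ∈ Set.Ico (-ε) (0:ℝ),
      A * (‖gradient f (α s)‖ * ‖α s‖) ≤ |⟪gradient f (α s), α s⟫|)
    (hlim : Tendsto (fun s => ⟪(‖α' s‖)⁻¹ • α' s, (‖α s‖)⁻¹ • α s⟫)
      (𝓝[<] (0:ℝ)) (𝓝 1)) :
    (∃ M : ℝ, ∀ s ∈ Set.Ico (-ε) (0:ℝ), ‖α s‖ ≤ M) ∧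
      ¬ Tendsto (fun s => ‖α s‖) (𝓝[<] (0:ℝ)) atTop :=
  statement13_general f hf b ε A hε hA θ hθpos hθint α α' hderiv hne hfα hmal hrad hlim
end
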